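/- Let q be a prime, let Q be the Heisenberg group of order q³ and exponent q (for q odd), generated by τ, σ, ρ with τ^q = σ^q = ρ^q = 1, τ central, and σ^ρ = τσ. Let w be an integer with w² ≢ 1 mod q, and let π act on Q by ρ^π = ρ, σ^π = σ^w, τ^π = τ^w. Then the induced action of π on the Schur multiplier M(Q) ≅ C_q × C_q has no nonzero fixed points; equivalently M(Q)^{⟨π⟩} = 1. -/

import Mathlib

/-- The group of 2-cocycles of `G` with values in the trivial `G`-module `M`. -/
def cocycleSet (G M : Type) [Group G] [CommGroup M] : Subgroup ((G × G) → M) where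
  carrier := {α | ∀ g h k : G, α (g, h) * α (g * h, k) = α (g, h * k) * α (h, k)}
  one_mem' := by intro g h k; simp
  mul_mem' := by
    intro a c ha hc g h k
    simp only [Pi.mul_apply]
    rw [mul_mul_mul_comm, ha g h k, hc g h k, mul_mul_mul_comm]
  inv_mem' := by
    intro a ha g h k
    simp only [Pi.inv_apply, ← mul_inv, ha g h k]

/-- The homomorphism sending `μ : G → M` to the 2-coboundary
`(g, h) ↦ μ(g) μ(h) μ(gh)⁻¹`. -/
def coboundaryHom (G M : Type) [Group G] [CommGroup M] : (G → M) →* ((G × G) → M) where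
  toFun μ := fun p => μ p.1 * μ p.2 * (μ (p.1 * p.2))⁻¹
  map_one' := by funext p; simp
  map_mul' := by
    intro μ ν; funext p
    simp only [Pi.mul_apply, mul_inv]
    ac_rfl

/-- The second cohomology group `H²(G, M)` of `G` with coefficients in the trivial
`G`-module `M`: 2-cocycles modulo 2-coboundaries. -/
abbrev H2 (G M : Type) [Group G] [CommGroup M] : Type :=
  ↥(cocycleSet G M) ⧸ ((coboundaryHom G M).range.subgroupOf (cocycleSet G M))

/-- The action of an automorphism `φ` of `G` on 2-cocycles: `α ↦ α ∘ (φ × φ)`. -/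
def cocycleComp (G M : Type) [Group G] [CommGroup M] (φ : G ≃* G) :
    ↥(cocycleSet G M) →* ↥(cocycleSet G M) where
  toFun a := ⟨fun p => (a : (G × G) → M) (φ p.1, φ p.2), by
    intro g h k
    simpa using a.2 (φ g) (φ h) (φ k)⟩
  map_one' := by ext p; rfl
  map_mul' := by intro a c; ext p; rfl

/-- The induced action of an automorphism `φ` of `G` on `H²(G, M)`. -/
def H2map (G M : Type) [Group G] [CommGroup M] (φ : G ≃* G) : H2 G M →* H2 G M :=
  QuotientGroup.map _ _ (cocycleComp G M φ) (by
    intro a ha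
    rw [Subgroup.mem_comap, Subgroup.mem_subgroupOf] at *
    obtain ⟨μ, hμ⟩ := ha
    refine ⟨μ ∘ ⇑φ, ?_⟩
    funext p
    have h1 := congrFun hμ (φ p.1, φ p.2)
    simp only [coboundaryHom, MonoidHom.coe_mk, OneHom.coe_mk, Function.comp_apply] at h1 ⊢
    rw [← map_mul φ] at h1
    rw [h1]
    rfl)

/-- The subgroup of `H²(G, M)` of classes fixed by every automorphism in `S`. -/
def H2fixed (G M : Type) [Group G] [CommGroup M] (S : Set (G ≃* G)) :
    Subgroup (H2 G M) where
  carrier := {c | ∀ φ ∈ S, H2map G M φ c = c}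
  one_mem' := by intro φ hφ; simp
  mul_mem' := by intro a c ha hc φ hφ; simp [map_mul, ha φ hφ, hc φ hφ]
  inv_mem' := by intro a ha φ hφ; simp [map_inv, ha φ hφ]

/-- The Heisenberg group of order `q³` and exponent `q` (for `q` an odd prime):
triples `(a, b, c)` representing `τ^a σ^b ρ^c` with `τ` central and `σ^ρ = τσ`. -/
def Heis (q : ℕ) : Type := ZMod q × ZMod q × ZMod q

instance (q : ℕ) : Group (Heis q) where
  mul x y := (x.1 + y.1 - x.2.2 * y.2.1, x.2.1 + y.2.1, x.2.2 + y.2.2)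
  one := (0, 0, 0)
  inv x := (-x.1 - x.2.2 * x.2.1, -x.2.1, -x.2.2)
  mul_assoc := by
    rintro ⟨a, b, c⟩ ⟨a', b', c'⟩ ⟨a'', b'', c''⟩
    refine Prod.ext ?_ (Prod.ext ?_ ?_)
    · show (a + a' - c * b') + a'' - (c + c') * b''
        = a + (a' + a'' - c' * b'') - c * (b' + b'')
      ring
    · show (b + b') + b'' = b + (b' + b'')
      ring
    · show (c + c') + c'' = c + (c' + c'')
      ring
  one_mul := by
    rintro ⟨a, b, c⟩
    refine Prod.ext ?_ (Prod.ext ?_ ?_)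
    · show (0 : ZMod q) + a - 0 * b = a
      ring
    · show (0 : ZMod q) + b = b
      ring
    · show (0 : ZMod q) + c = c
      ring
  mul_one := by
    rintro ⟨a, b, c⟩
    refine Prod.ext ?_ (Prod.ext ?_ ?_)
    · show a + 0 - c * 0 = a
      ring
    · show b + (0 : ZMod q) = b
      ring
    · show c + (0 : ZMod q) = c
      ring
  inv_mul_cancel := by
    rintro ⟨a, b, c⟩
    refine Prod.ext ?_ (Prod.ext ?_ ?_)
    · show (-a - c * b) + a - (-c) * b = 0
      ring
    · show -b + b = (0 : ZMod q)
      ring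
    · show -c + c = (0 : ZMod q)
      ring

/-- The element `τ = (1,0,0)` (central) of the Heisenberg group. -/
def Heis.tau (q : ℕ) : Heis q := ((1 : ZMod q), 0, 0)

/-- The element `σ = (0,1,0)` of the Heisenberg group. -/
def Heis.sigma (q : ℕ) : Heis q := (0, (1 : ZMod q), 0)

/-- The element `ρ = (0,0,1)` of the Heisenberg group; it satisfies `σ^ρ = τσ`. -/
def Heis.rho (q : ℕ) : Heis q := (0, 0, (1 : ZMod q))

/-- The automorphism `π` of the Heisenberg group determined by `ρ^π = ρ`,
`σ^π = σ^w`, `τ^π = τ^w` for a unit `w` mod `q`. -/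
def heisAut (q : ℕ) (w : (ZMod q)ˣ) : Heis q ≃* Heis q where
  toFun x := ((w : ZMod q) * x.1, (w : ZMod q) * x.2.1, x.2.2)
  invFun x := (((w⁻¹ : (ZMod q)ˣ) : ZMod q) * x.1, ((w⁻¹ : (ZMod q)ˣ) : ZMod q) * x.2.1, x.2.2)
  left_inv := by
    intro x
    refine Prod.ext ?_ (Prod.ext ?_ ?_) <;>
      simp [← mul_assoc, ← Units.val_mul]
  right_inv := by
    intro x
    refine Prod.ext ?_ (Prod.ext ?_ ?_) <;>
      simp [← mul_assoc, ← Units.val_mul]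
  map_mul' := by
    rintro ⟨a, b, c⟩ ⟨a', b', c'⟩
    refine Prod.ext ?_ (Prod.ext ?_ ?_)
    · show (w : ZMod q) * (a + a' - c * b')
        = (w : ZMod q) * a + (w : ZMod q) * a' - c * ((w : ZMod q) * b')
      ring
    · show (w : ZMod q) * (b + b') = (w : ZMod q) * b + (w : ZMod q) * b'
      ring
    · show c + c' = c + c'
      rfl

/-!
A class fixed by `π` is represented by a cocycle `f` with `f ∘ (π × π) = f · δμ`. Coboundaries
pair trivially under `⟨g, h⟩_f = f(g, h) / f(h, g)` on commuting pairs, so this pairing is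
`π`-invariant. As `τ` is central, `⟨τ, ·⟩_f` is a homomorphism with values in the `q`-th roots of
unity, and invariance gives `⟨τ, σ⟩ = ⟨τ, σ⟩^{w²}` and `⟨τ, ρ⟩ = ⟨τ, ρ⟩^w`; since `w² ≢ 1` and
`w ≢ 1`, the pairing `⟨τ, ·⟩_f` is trivial. Then every lift of `τ` to the central extension of
`Q` by `ℂˣ` defined by `f` is central. Lifting `σ` and `ρ` to elements of order dividing `q`
(`ℂˣ` has `q`-th roots), their commutator lifts `τ`, so the defining relations of `Q` hold in the
extension, which therefore splits, and `f` is a coboundary.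
-/

section CommPairing
variable {G M : Type} [CommGroup M]

def commPairing (g h : G) : (G × G → M) →* M where
  toFun f := f (g, h) / f (h, g)
  map_one' := by simp
  map_mul' f f' := by simp only [Pi.mul_apply]; exact mul_div_mul_comm _ _ _ _

lemma commPairing_swap (g h : G) (f : G × G → M) :
    commPairing h g f = (commPairing g h f)⁻¹ := (inv_div _ _).symm

variable [Group G]

lemma commPairing_coboundaryHom {g h : G} (hgh : Commute g h) (μ : G → M) :
    commPairing g h (coboundaryHom G M μ) = 1 := by
  simp [commPairing, coboundaryHom, hgh.eq, mul_comm (μ g)]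

variable {f : G × G → M} (hf : f ∈ cocycleSet G M)
include hf

lemma apply_one_left_of_mem_cocycleSet (g : G) : f (1, g) = f (1, 1) := by
  simpa using (hf 1 1 g).symm

lemma apply_one_right_of_mem_cocycleSet (g : G) : f (g, 1) = f (1, 1) := by
  simpa using hf g 1 1

lemma commPairing_one_right (g : G) : commPairing g 1 f = 1 := by
  simp [commPairing, apply_one_left_of_mem_cocycleSet hf, apply_one_right_of_mem_cocycleSet hf]

lemma commPairing_mul_right {g h k : G} (hgh : Commute g h) (hgk : Commute g k) :
    commPairing g (h * k) f = commPairing g h f * commPairing g k f := by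
  have e1 := hf g h k
  have e2 := hf h g k
  have e3 := hf h k g
  rw [← hgh.eq, hgk.eq] at e2
  simp only [commPairing, MonoidHom.coe_mk, OneHom.coe_mk]
  rw [div_mul_div_comm, div_eq_div_iff_mul_eq_mul]
  apply mul_right_cancel (b := f (h, k) * f (g * h, k))
  calc _ = (f (g, h * k) * f (h, k)) * (f (h, g) * f (g * h, k)) * f (k, g) := by ac_rfl
    _ = f (g, h) * f (g, k) * f (g * h, k) * (f (h, k * g) * f (k, g)) := by
      rw [← e1, e2]; ac_rfl
    _ = _ := by rw [← e3]; ac_rfl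

lemma commPairing_pow_right {g h : G} (hgh : Commute g h) (n : ℕ) :
    commPairing g (h ^ n) f = commPairing g h f ^ n := by
  induction n with
  | zero => simpa using commPairing_one_right hf g
  | succ n ih => rw [pow_succ, commPairing_mul_right hf (hgh.pow_right n) hgh, ih, pow_succ]

lemma commPairing_pow_pow {g h : G} (hgh : Commute g h) (m n : ℕ) :
    commPairing (g ^ m) (h ^ n) f = commPairing g h f ^ (m * n) := by
  rw [commPairing_pow_right hf (hgh.pow_left m), commPairing_swap,
    commPairing_pow_right hf hgh.symm, commPairing_swap]
  simp only [inv_pow, inv_inv, pow_mul]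

def commPairingHom {z : G} (hz : z ∈ Subgroup.center G) : G →* M where
  toFun g := commPairing z g f
  map_one' := commPairing_one_right hf z
  map_mul' _ _ := commPairing_mul_right hf (Subgroup.mem_center_iff.1 hz _).symm
    (Subgroup.mem_center_iff.1 hz _).symm

end CommPairing

lemma commPairing_eq_of_H2map_eq {G M : Type} [Group G] [CommGroup M] {φ : G ≃* G}
    {a : cocycleSet G M} (hfix : H2map G M φ a = a) {g h : G} (hgh : Commute g h) :
    commPairing (φ g) (φ h) (a : G × G → M) = commPairing g h a := by
  rw [H2map, QuotientGroup.map_mk, QuotientGroup.eq, Subgroup.mem_subgroupOf] at hfix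
  obtain ⟨μ, hμ⟩ := hfix
  have := congrArg (commPairing g h) hμ
  rwa [commPairing_coboundaryHom hgh, Subgroup.coe_mul, Subgroup.coe_inv, map_mul, map_inv,
    eq_comm, inv_mul_eq_one] at this

lemma eq_one_of_pow_eq_self {N : Type} [LeftCancelMonoid N] {p : ℕ} [Fact p.Prime] {x : N}
    (hx : x ^ p = 1) {n : ℕ} (hn : x ^ n = x) (hn1 : (n : ZMod p) ≠ 1) : x = 1 := by
  by_contra hx1
  refine hn1 (((ZMod.natCast_eq_natCast_iff n 1 p).2 ?_).trans Nat.cast_one)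
  rw [← orderOf_eq_prime hx hx1, ← pow_eq_pow_iff_modEq, pow_one, hn]

lemma commPairing_eq_one_of_pow_pow {G M : Type} [Group G] [CommGroup M] {q : ℕ} [Fact q.Prime]
    {f : G × G → M} (hf : f ∈ cocycleSet G M) {z h : G} (hzh : Commute z h) (hh : h ^ q = 1)
    {m n : ℕ} (hmn : ((m * n : ℕ) : ZMod q) ≠ 1)
    (hinv : commPairing (z ^ m) (h ^ n) f = commPairing z h f) : commPairing z h f = 1 :=
  eq_one_of_pow_eq_self (by rw [← commPairing_pow_right hf hzh, hh, commPairing_one_right hf])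
    (by rw [← commPairing_pow_pow hf hzh, hinv]) hmn

@[ext] structure CocycleExt {G M : Type} [Group G] [CommGroup M] (a : cocycleSet G M) where
  z : M
  g : G

namespace CocycleExt
variable {G M : Type} [Group G] [CommGroup M] {a : cocycleSet G M}

local notation "F" => (a : G × G → M)

instance : Group (CocycleExt a) where
  mul x y := ⟨x.z * y.z * F (x.g, y.g), x.g * y.g⟩
  -- cocycles are not assumed normalized, so the identity sits over `1` at `f(1, 1)⁻¹`
  one := ⟨(F (1, 1))⁻¹, 1⟩
  inv x := ⟨(F (1, 1) * x.z * F (x.g⁻¹, x.g))⁻¹, x.g⁻¹⟩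
  mul_assoc x y w := by
    refine CocycleExt.ext ?_ (mul_assoc _ _ _)
    show x.z * y.z * F (x.g, y.g) * w.z * F (x.g * y.g, w.g)
      = x.z * (y.z * w.z * F (y.g, w.g)) * F (x.g, y.g * w.g)
    calc _ = x.z * y.z * w.z * (F (x.g, y.g) * F (x.g * y.g, w.g)) := by ac_rfl
      _ = _ := by rw [a.2]; ac_rfl
  one_mul x := by
    refine CocycleExt.ext ?_ (one_mul _)
    show (F (1, 1))⁻¹ * x.z * F (1, x.g) = x.z
    rw [apply_one_left_of_mem_cocycleSet a.2 x.g, inv_mul_cancel_comm]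
  mul_one x := by
    refine CocycleExt.ext ?_ (mul_one _)
    show x.z * (F (1, 1))⁻¹ * F (x.g, 1) = x.z
    rw [apply_one_right_of_mem_cocycleSet a.2 x.g, inv_mul_cancel_right]
  inv_mul_cancel x := by
    refine CocycleExt.ext ?_ (inv_mul_cancel _)
    show (F (1, 1) * x.z * F (x.g⁻¹, x.g))⁻¹ * x.z * F (x.g⁻¹, x.g) = (F (1, 1))⁻¹
    simp [mul_comm, mul_left_comm]

@[simp] lemma mul_z (x y : CocycleExt a) : (x * y).z = x.z * y.z * F (x.g, y.g) := rfl
@[simp] lemma one_z : (1 : CocycleExt a).z = (F (1, 1))⁻¹ := rfl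

variable (a) in
def proj : CocycleExt a →* G where
  toFun := CocycleExt.g
  map_one' := rfl
  map_mul' _ _ := rfl

@[simp] lemma proj_apply (x : CocycleExt a) : proj a x = x.g := rfl

@[simp] lemma pow_g (x : CocycleExt a) (n : ℕ) : (x ^ n).g = x.g ^ n := map_pow (proj a) x n

lemma pow_mk_z (c : M) (g : G) (n : ℕ) :
    ((⟨c, g⟩ : CocycleExt a) ^ n).z = c ^ n * ((⟨1, g⟩ : CocycleExt a) ^ n).z := by
  induction n with
  | zero => simp
  | succ n ih =>
    simp only [pow_succ, mul_z, ih, pow_g]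
    ac_rfl

lemma exists_lift_pow_eq_one {n : ℕ} (hroot : ∀ m : M, ∃ c : M, c ^ n = m) {g : G}
    (hg : g ^ n = 1) : ∃ x : CocycleExt a, x.g = g ∧ x ^ n = 1 := by
  obtain ⟨c, hc⟩ := hroot (((⟨1, g⟩ : CocycleExt a) ^ n).z * F (1, 1))⁻¹
  refine ⟨⟨c, g⟩, rfl, CocycleExt.ext ?_ ?_⟩
  · rw [pow_mk_z, hc, one_z, mul_inv, inv_mul_cancel_comm]
  · rw [pow_g, hg]; rfl

lemma commute_of_commPairing_eq_one {x : CocycleExt a} (hx : x.g ∈ Subgroup.center G)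
    (hpair : ∀ h : G, commPairing x.g h F = 1) (y : CocycleExt a) : Commute x y := by
  refine CocycleExt.ext ?_ (Subgroup.mem_center_iff.1 hx y.g).symm
  show x.z * y.z * F (x.g, y.g) = y.z * x.z * F (y.g, x.g)
  rw [div_eq_one.1 (hpair y.g), mul_comm x.z]

lemma coboundary_of_section (φ : G →* CocycleExt a) (hφ : ∀ g, (φ g).g = g) :
    F ∈ (coboundaryHom G M).range := by
  refine ⟨fun g => (φ g).z⁻¹, funext fun p => ?_⟩
  show (φ p.1).z⁻¹ * (φ p.2).z⁻¹ * ((φ (p.1 * p.2)).z)⁻¹⁻¹ = F p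
  rw [map_mul, mul_z, hφ, hφ, inv_inv, ← mul_inv, inv_mul_cancel_left]

end CocycleExt

section HeisenbergRelations
variable {E : Type} [Group E] {t s r : E}
  (htr : Commute t r) (hts : Commute t s) (hrs : r * s = s * r * t⁻¹)
include htr hts hrs

lemma zpow_comm_of_heisenberg (b c : ℤ) :
    r ^ c * s ^ b = s ^ b * r ^ c * t ^ (-(b * c)) := by
  have h1 : SemiconjBy r s (s * t⁻¹) := by
    rw [SemiconjBy, hrs, mul_assoc, mul_assoc, htr.inv_left.eq]
  have h2 : SemiconjBy (s ^ b) (t ^ (-b) * r) r := by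
    have := h1.zpow_right b
    rw [SemiconjBy, hts.inv_left.symm.mul_zpow, inv_zpow'] at this
    rw [SemiconjBy, ← mul_assoc, this]
  have h3 := h2.zpow_right c
  rw [SemiconjBy, (htr.zpow_left (-b)).mul_zpow, ← zpow_mul] at h3
  rw [← h3, ((htr.zpow_left _).zpow_right c).eq, neg_mul, mul_assoc]

lemma normal_form_mul_of_heisenberg (a b c a' b' c' : ℤ) :
    t ^ a * s ^ b * r ^ c * (t ^ a' * s ^ b' * r ^ c')
      = t ^ (a + a' - c * b') * s ^ (b + b') * r ^ (c + c') := by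
  have hs (m k : ℤ) : Commute (s ^ m) (t ^ k) := (hts.zpow_zpow k m).symm
  have hr (m k : ℤ) : Commute (r ^ m) (t ^ k) := (htr.zpow_zpow k m).symm
  calc _ = t ^ a * (t ^ a' * (s ^ b * ((r ^ c * s ^ b') * r ^ c'))) := by
        simp only [mul_assoc]; rw [(hr c a').left_comm, (hs b a').left_comm]
    _ = t ^ a * (t ^ a' * (t ^ (-(b' * c)) * (s ^ b * (s ^ b' * (r ^ c * r ^ c'))))) := by
        rw [zpow_comm_of_heisenberg htr hts hrs]
        simp only [mul_assoc]
        rw [(hr c _).left_comm, (hs b' _).left_comm, (hs b _).left_comm]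
    _ = _ := by simp only [← mul_assoc, ← zpow_add, sub_eq_add_neg, add_assoc, mul_comm b' c]

lemma pow_eq_one_of_heisenberg {n : ℕ} (hs : s ^ n = 1) : t ^ n = 1 := by
  have := zpow_comm_of_heisenberg htr hts hrs n 1
  rw [zpow_natCast, hs] at this
  simpa using this

end HeisenbergRelations

lemma zpow_eq_zpow_of_intCast_eq {E : Type} [Group E] {x : E} {n : ℕ} (hx : x ^ n = 1) {k l : ℤ}
    (h : (k : ZMod n) = l) : x ^ k = x ^ l := by
  rw [zpow_eq_zpow_emod' k hx, zpow_eq_zpow_emod' l hx, (ZMod.intCast_eq_intCast_iff' k l n).1 h]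

namespace Heis
variable {q : ℕ}

def mk (a b c : ZMod q) : Heis q := (a, b, c)

lemma mk_mul_mk (a b c a' b' c' : ZMod q) :
    mk a b c * mk a' b' c' = mk (a + a' - c * b') (b + b') (c + c') := rfl

lemma mk_eq_mk {a b c a' b' c' : ZMod q} : mk a b c = mk a' b' c' ↔ a = a' ∧ b = b' ∧ c = c' :=
  Prod.ext_iff.trans (and_congr_right fun _ => Prod.ext_iff)

lemma one_eq_mk : (1 : Heis q) = mk 0 0 0 := rfl
lemma mk_eta (x : Heis q) : mk x.1 x.2.1 x.2.2 = x := rfl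
lemma tau_eq_mk : tau q = mk 1 0 0 := rfl
lemma sigma_eq_mk : sigma q = mk 0 1 0 := rfl
lemma rho_eq_mk : rho q = mk 0 0 1 := rfl

lemma tau_pow (n : ℕ) : tau q ^ n = mk n 0 0 := by
  induction n with
  | zero => simp [one_eq_mk]
  | succ n ih => rw [pow_succ, ih, tau_eq_mk, mk_mul_mk, mk_eq_mk]; simp

lemma sigma_pow (n : ℕ) : sigma q ^ n = mk 0 n 0 := by
  induction n with
  | zero => simp [one_eq_mk]
  | succ n ih => rw [pow_succ, ih, sigma_eq_mk, mk_mul_mk, mk_eq_mk]; simp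

lemma rho_pow (n : ℕ) : rho q ^ n = mk 0 0 n := by
  induction n with
  | zero => simp [one_eq_mk]
  | succ n ih => rw [pow_succ, ih, rho_eq_mk, mk_mul_mk, mk_eq_mk]; simp

lemma sigma_pow_card : sigma q ^ q = 1 := by simp [sigma_pow, one_eq_mk]

lemma rho_pow_card : rho q ^ q = 1 := by simp [rho_pow, one_eq_mk]

lemma tau_mem_center : tau q ∈ Subgroup.center (Heis q) :=
  Subgroup.mem_center_iff.2 fun x => by
    rw [← mk_eta x, tau_eq_mk, mk_mul_mk, mk_mul_mk, mk_eq_mk]; ring_nf; simp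

lemma rho_mul_sigma : rho q * sigma q = sigma q * rho q * (tau q)⁻¹ := by
  rw [eq_mul_inv_iff_mul_eq, rho_eq_mk, sigma_eq_mk, tau_eq_mk]
  simp [mk_mul_mk]

lemma tau_eq_inv_mul : tau q = (rho q * sigma q)⁻¹ * (sigma q * rho q) := by
  rw [rho_mul_sigma]; group

lemma tau_pow_mul_sigma_pow_mul_rho_pow [NeZero q] (x : Heis q) :
    tau q ^ x.1.val * sigma q ^ x.2.1.val * rho q ^ x.2.2.val = x := by
  simp [tau_pow, sigma_pow, rho_pow, mk_mul_mk, mk_eta]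

lemma hom_ext [NeZero q] {E : Type} [Group E] {f₁ f₂ : Heis q →* E}
    (hσ : f₁ (sigma q) = f₂ (sigma q)) (hρ : f₁ (rho q) = f₂ (rho q)) : f₁ = f₂ := by
  have hτ : f₁ (tau q) = f₂ (tau q) := by simp [tau_eq_inv_mul (q := q), hσ, hρ]
  ext x
  rw [← tau_pow_mul_sigma_pow_mul_rho_pow x]
  simp only [map_mul, map_pow, hσ, hρ, hτ]

variable [NeZero q]

section Lift
variable {E : Type} [Group E] {t s r : E}

def lift (htr : Commute t r) (hts : Commute t s) (hrs : r * s = s * r * t⁻¹)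
    (hs : s ^ q = 1) (hr : r ^ q = 1) : Heis q →* E where
  toFun x := t ^ x.1.val * s ^ x.2.1.val * r ^ x.2.2.val
  map_one' := by simp [one_eq_mk, mk]
  map_mul' x y := by
    have ht := pow_eq_one_of_heisenberg htr hts hrs hs
    simp only [← zpow_natCast]
    rw [normal_form_mul_of_heisenberg htr hts hrs, ← mk_eta x, ← mk_eta y, mk_mul_mk]
    refine congr_arg₂ (· * ·) (congr_arg₂ (· * ·) ?_ ?_) ?_
    · exact zpow_eq_zpow_of_intCast_eq ht (by simp [mk])
    · exact zpow_eq_zpow_of_intCast_eq hs (by simp [mk])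
    · exact zpow_eq_zpow_of_intCast_eq hr (by simp [mk])

variable (htr : Commute t r) (hts : Commute t s) (hrs : r * s = s * r * t⁻¹)
    (hs : s ^ q = 1) (hr : r ^ q = 1)

lemma lift_apply (x : Heis q) :
    lift htr hts hrs hs hr x = t ^ x.1.val * s ^ x.2.1.val * r ^ x.2.2.val := rfl

lemma lift_sigma : lift htr hts hrs hs hr (sigma q) = s := by
  rw [lift_apply, sigma_eq_mk]
  simp only [mk, ZMod.val_zero, pow_zero, one_mul, mul_one]
  rw [← zpow_natCast, zpow_eq_zpow_of_intCast_eq hs (l := 1) (by simp), zpow_one]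

lemma lift_rho : lift htr hts hrs hs hr (rho q) = r := by
  rw [lift_apply, rho_eq_mk]
  simp only [mk, ZMod.val_zero, pow_zero, one_mul]
  rw [← zpow_natCast, zpow_eq_zpow_of_intCast_eq hr (l := 1) (by simp), zpow_one]

end Lift

theorem coboundary_of_commPairing_tau_eq_one {M : Type} [CommGroup M]
    (hroot : ∀ m : M, ∃ c : M, c ^ q = m) (a : cocycleSet (Heis q) M)
    (hσ : commPairing (tau q) (sigma q) (a : Heis q × Heis q → M) = 1)
    (hρ : commPairing (tau q) (rho q) (a : Heis q × Heis q → M) = 1) :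
    (a : Heis q × Heis q → M) ∈ (coboundaryHom (Heis q) M).range := by
  have hτ (g : Heis q) : commPairing (tau q) g (a : Heis q × Heis q → M) = 1 :=
    DFunLike.congr_fun (hom_ext (f₁ := commPairingHom a.2 tau_mem_center) (f₂ := 1) hσ hρ) g
  obtain ⟨s, hsg, hs⟩ := CocycleExt.exists_lift_pow_eq_one (a := a) hroot sigma_pow_card
  obtain ⟨r, hrg, hr⟩ := CocycleExt.exists_lift_pow_eq_one (a := a) hroot rho_pow_card
  set t := (r * s)⁻¹ * (s * r)
  have htg : t.g = tau q := by
    rw [tau_eq_inv_mul, ← hsg, ← hrg]; rfl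
  have ht (y : CocycleExt a) : Commute t y :=
    CocycleExt.commute_of_commPairing_eq_one (htg ▸ tau_mem_center) (htg ▸ hτ) y
  have hrs : r * s = s * r * t⁻¹ := by simp only [t]; group
  refine CocycleExt.coboundary_of_section (lift (ht r) (ht s) hrs hs hr) fun g => ?_
  rw [← CocycleExt.proj_apply, ← MonoidHom.comp_apply]
  exact DFunLike.congr_fun (hom_ext (f₂ := MonoidHom.id _)
    (by simp [lift_sigma, hsg]) (by simp [lift_rho, hrg])) g

end Heis

lemma exists_units_pow_eq {K : Type} [Field K] [IsAlgClosed K] {n : ℕ} (hn : n ≠ 0) (u : Kˣ) :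
    ∃ v : Kˣ, v ^ n = u := by
  obtain ⟨c, hc⟩ := IsAlgClosed.exists_pow_nat_eq (u : K) (Nat.pos_of_ne_zero hn)
  have hc0 : c ≠ 0 := by rintro rfl; exact u.ne_zero (by rw [← hc, zero_pow hn])
  exact ⟨Units.mk0 c hc0, Units.ext (by simpa using hc)⟩

section
variable {q : ℕ} (w : (ZMod q)ˣ)

lemma heisAut_rho : heisAut q w (Heis.rho q) = Heis.rho q :=
  Heis.mk_eq_mk.2 (by simp [Heis.rho])

variable [NeZero q]

lemma heisAut_tau : heisAut q w (Heis.tau q) = Heis.tau q ^ (w : ZMod q).val := by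
  rw [Heis.tau_pow, ZMod.natCast_zmod_val]
  exact Heis.mk_eq_mk.2 (by simp [Heis.tau])

lemma heisAut_sigma : heisAut q w (Heis.sigma q) = Heis.sigma q ^ (w : ZMod q).val := by
  rw [Heis.sigma_pow, ZMod.natCast_zmod_val]
  exact Heis.mk_eq_mk.2 (by simp [Heis.sigma])

end

theorem heis_multiplier_no_fixed_points_general (q : ℕ) (hq : q.Prime)
    (w : (ZMod q)ˣ) (hw : ((w : ZMod q)) ^ 2 ≠ 1) :
    H2fixed (Heis q) ℂˣ {heisAut q w} = ⊥ := by
  have : Fact q.Prime := ⟨hq⟩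
  rw [Subgroup.eq_bot_iff_forall]
  intro c hc
  obtain ⟨a, rfl⟩ := QuotientGroup.mk_surjective c
  have hinv {g h : Heis q} (hgh : Commute g h) :=
    commPairing_eq_of_H2map_eq (hc (heisAut q w) rfl) hgh
  have hτ (g : Heis q) : Commute (Heis.tau q) g :=
    (Subgroup.mem_center_iff.1 Heis.tau_mem_center g).symm
  have hσ := commPairing_eq_one_of_pow_pow a.2 (hτ _) Heis.sigma_pow_card
    (m := (w : ZMod q).val) (n := (w : ZMod q).val)
    (by rwa [Nat.cast_mul, ZMod.natCast_zmod_val, ← sq])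
    (by simpa only [heisAut_tau, heisAut_sigma] using hinv (hτ (Heis.sigma q)))
  have hρ := commPairing_eq_one_of_pow_pow a.2 (hτ _) Heis.rho_pow_card
    (m := (w : ZMod q).val) (n := 1)
    (by rw [mul_one, ZMod.natCast_zmod_val]; rintro h; exact hw (by rw [h, one_pow]))
    (by simpa only [heisAut_tau, heisAut_rho, pow_one] using hinv (hτ (Heis.rho q)))
  exact (QuotientGroup.eq_one_iff _).2 (Subgroup.mem_subgroupOf.2
    (Heis.coboundary_of_commPairing_tau_eq_one (exists_units_pow_eq hq.ne_zero) a hσ hρ))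

/-- Dade's example, key step: let `q` be an odd prime, `Q` the Heisenberg group of
order `q³` and exponent `q`, and `w` a unit mod `q` with `w² ≢ 1 mod q`. Then the
automorphism `π : ρ ↦ ρ, σ ↦ σ^w, τ ↦ τ^w` acts on the Schur multiplier
`M(Q) ≅ C_q × C_q` without nonzero fixed points: `M(Q)^⟨π⟩ = 1`. -/
theorem heis_multiplier_no_fixed_points (q : ℕ) (hq : q.Prime) (hodd : Odd q)
    (w : (ZMod q)ˣ) (hw : ((w : ZMod q)) ^ 2 ≠ 1) :
    H2fixed (Heis q) ℂˣ {heisAut q w} = ⊥ :=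
  heis_multiplier_no_fixed_points_general q hq w hw
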